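/- arXiv:2502.07041 — 3 statements merged into one kernel-verified Lean document; each statement's English description precedes it below -/
import Mathlib

section
/- Let 1 < p < 2. There exists a constant c > 0 such that for every n ∈ ℕ and every finite family f_1, …, f_n ∈ X_p of measurable functions on [0,1], one has sup_{t>0} t · (#{k : ‖f_k‖_{L^1[0,1]} > t})^{1/p} ≤ c · max_{ε ∈ {-1,1}^n} ‖Σ_{k=1}^n ε_k f_k‖_{X_p}. (That is, the inclusion X_p ⊂ L^1 is (ℓ^{p,∞},1)-absolutely summing.) -/
open MeasureTheory
open scoped ENNReal

/-- Lebesgue measure restricted to `[0,1]`. -/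
noncomputable def mu01 : Measure ℝ := volume.restrict (Set.Icc 0 1)

/-- The weight `W_p(t) = (log(e/t))^{1-p}` for `t ∈ (0,1]`, `W_p(0)=0`. -/
noncomputable def Wp (p t : ℝ) : ℝ :=
  if t = 0 then 0 else Real.log (Real.exp 1 / t) ^ (1 - p)

/-- The norm of the Lorentz space `X_p` on `[0,1]`:
`‖f‖_{X_p} = (∫_0^∞ W_p(μ{s ∈ [0,1] : |f s|^p > λ}) dλ)^{1/p}`. -/
noncomputable def XpNorm (p : ℝ) (f : ℝ → ℝ) : ℝ≥0∞ :=
  (∫⁻ lam in Set.Ioi (0 : ℝ),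
      ENNReal.ofReal
        (Wp p (volume {s : ℝ | s ∈ Set.Icc (0 : ℝ) 1 ∧ lam < |f s| ^ p}).toReal)) ^ (1 / p)

/-- Luxemburg norm of the exponential Orlicz space `Exp L^α` on `[0,1]`. -/
noncomputable def expLNorm (α : ℝ) (f : ℝ → ℝ) : ℝ≥0∞ :=
  ⨅ (lam : ℝ) (_ : 0 < lam ∧
      ∫⁻ t, ENNReal.ofReal (Real.exp ((|f t| / lam) ^ α) - 1) ∂mu01 ≤ 1),
    ENNReal.ofReal lam

/-- Weak `ℓ^q` quasinorm of a finite family of reals. -/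
noncomputable def weakLq (q : ℝ) {n : ℕ} (a : Fin n → ℝ) : ℝ :=
  ⨆ t : Set.Ioi (0 : ℝ), t.1 * (Nat.card {k : Fin n // t.1 < |a k|} : ℝ) ^ (1 / q)

/-- Weak `ℓ^q` quasinorm of a sequence with values in `[0,∞]`, cardinalities
taken via the counting measure on `ℕ`. -/
noncomputable def weakLqSeq (q : ℝ) (a : ℕ → ℝ≥0∞) : ℝ≥0∞ :=
  ⨆ t : Set.Ioi (0 : ℝ),
    ENNReal.ofReal t.1 * Measure.count {k : ℕ | ENNReal.ofReal t.1 < a k} ^ (1 / q)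

/-- Peetre `K`-functional for the couple `(L^1[0,1], L^∞[0,1])`. -/
noncomputable def Kfun (τ : ℝ) (f : ℝ → ℝ) : ℝ≥0∞ :=
  ⨅ (g : ℝ → ℝ) (h : ℝ → ℝ) (_ : f = g + h),
    eLpNorm g 1 mu01 + ENNReal.ofReal τ * eLpNorm h ⊤ mu01

/-- The Rademacher functions `r_k(t) = sgn(sin(2^k π t))`. -/
noncomputable def rademacher (k : ℕ) (t : ℝ) : ℝ :=
  Real.sign (Real.sin (2 ^ k * Real.pi * t))

/-- Marcinkiewicz space norm `‖f‖_{M_φ} = sup_{0<t≤1} (φ(t)/t) K(t,f;L^1,L^∞)`. -/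
noncomputable def MNorm (φ : ℝ → ℝ) (f : ℝ → ℝ) : ℝ≥0∞ :=
  ⨆ t : {t : ℝ // 0 < t ∧ t ≤ 1}, ENNReal.ofReal (φ t.1 / t.1) * Kfun t.1 f

/-!
The weight `W_p` forces functions in the unit ball of `X_p` to have exponential-type tails,
`μ{|g| > x} ≤ exp (1 - x ^ p')` with `p' = p / (p - 1)`, so the mean of the maximum of `N`
such functions is `O((1 + log N) ^ (1 / p'))`. If `‖f_k‖₁ > t` for the `m` indices of a set
`A`, then choosing the signs pointwise shows that `∑_{k ∈ A} |f_k|` is dominated by the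
maximum of `2 ^ (m + 1)` signed sums; integrating gives `t m ≲ S m ^ (1 / p')`, that is
`t m ^ (1 / p) ≲ S`.
-/

open Real

instance isProbabilityMeasure_mu01 : IsProbabilityMeasure mu01 := ⟨by simp [mu01]⟩

lemma measureReal_mu01_mem_Icc (s : Set ℝ) : (mu01 s).toReal ∈ Set.Icc (0 : ℝ) 1 :=
  ⟨ENNReal.toReal_nonneg, measureReal_le_one⟩

lemma Wp_of_pos (p : ℝ) {t : ℝ} (ht : 0 < t) : Wp p t = (1 - log t) ^ (1 - p) := by
  rw [Wp, if_neg ht.ne', log_div (exp_pos 1).ne' ht.ne', log_exp]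

lemma one_le_one_sub_log {t : ℝ} (ht : t ∈ Set.Ioc (0 : ℝ) 1) : 1 ≤ 1 - log t := by
  linarith [log_nonpos ht.1.le ht.2]

lemma Wp_nonneg (p : ℝ) {t : ℝ} (ht : t ∈ Set.Icc (0 : ℝ) 1) : 0 ≤ Wp p t := by
  rcases ht.1.eq_or_lt with rfl | ht0
  · simp [Wp]
  · rw [Wp_of_pos p ht0]
    exact rpow_nonneg (zero_le_one.trans (one_le_one_sub_log ⟨ht0, ht.2⟩)) _

lemma Wp_monotoneOn {p : ℝ} (hp : 1 < p) : MonotoneOn (Wp p) (Set.Icc 0 1) := by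
  intro a ha b hb hab
  rcases ha.1.eq_or_lt with rfl | ha0
  · simpa [Wp] using Wp_nonneg p hb
  have hb0 := ha0.trans_le hab
  rw [Wp_of_pos p ha0, Wp_of_pos p hb0]
  refine rpow_le_rpow_of_nonpos ?_ ?_ (by linarith)
  · linarith [one_le_one_sub_log ⟨hb0, hb.2⟩]
  · linarith [log_le_log ha0 hab]

lemma XpNorm_rpow {p : ℝ} (hp : 0 < p) (g : ℝ → ℝ) :
    XpNorm p g ^ p =
      ∫⁻ lam in Set.Ioi 0, ENNReal.ofReal (Wp p (mu01 {s | lam < |g s| ^ p}).toReal) := by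
  rw [XpNorm, ← ENNReal.rpow_mul, one_div_mul_cancel hp.ne', ENNReal.rpow_one]
  simp only [mu01, Measure.restrict_apply' measurableSet_Icc, Set.inter_comm]
  rfl

lemma ofReal_Wp_mul_le_XpNorm_rpow {p : ℝ} (hp : 1 < p) (g : ℝ → ℝ) (lam₀ : ℝ) :
    ENNReal.ofReal (Wp p (mu01 {s | lam₀ < |g s| ^ p}).toReal) * ENNReal.ofReal lam₀ ≤
      XpNorm p g ^ p := by
  rw [XpNorm_rpow (by linarith) g]
  set W := fun lam => ENNReal.ofReal (Wp p (mu01 {s | lam < |g s| ^ p}).toReal)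
  calc W lam₀ * ENNReal.ofReal lam₀ = ∫⁻ _ in Set.Ioc 0 lam₀, W lam₀ := by
        rw [setLIntegral_const, Real.volume_Ioc, sub_zero]
    _ ≤ ∫⁻ lam in Set.Ioc 0 lam₀, W lam := by
        refine setLIntegral_mono' measurableSet_Ioc fun lam hlam => ENNReal.ofReal_le_ofReal ?_
        refine Wp_monotoneOn hp (measureReal_mu01_mem_Icc _) (measureReal_mu01_mem_Icc _) ?_
        exact ENNReal.toReal_mono (measure_ne_top _ _)
          (measure_mono fun s hs => hlam.2.trans_lt hs)
    _ ≤ _ := lintegral_mono_set Set.Ioc_subset_Ioi_self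

lemma le_exp_of_Wp_mul_rpow_le {p d x S : ℝ} (hp : 1 < p) (hd : d ∈ Set.Icc (0 : ℝ) 1)
    (hS : 0 < S) (hx : 0 ≤ x) (h : Wp p d * x ^ p ≤ S ^ p) :
    d ≤ exp (1 - (x / S) ^ (p / (p - 1))) := by
  rcases hd.1.eq_or_lt with rfl | hd0
  · exact (exp_pos _).le
  set L := 1 - log d with hL_def
  have hL : 1 ≤ L := one_le_one_sub_log ⟨hd0, hd.2⟩
  have hL0 : 0 < L := by linarith
  have hp1 : 0 < p - 1 := by linarith
  rw [Wp_of_pos p hd0] at h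
  have hxS : (x / S) ^ p ≤ L ^ (p - 1) := by
    rw [div_rpow hx hS.le, div_le_iff₀ (by positivity)]
    calc x ^ p = L ^ (p - 1) * (L ^ (1 - p) * x ^ p) := by
          rw [← mul_assoc, ← rpow_add hL0, show p - 1 + (1 - p) = 0 by ring, rpow_zero, one_mul]
      _ ≤ L ^ (p - 1) * S ^ p := by gcongr
  have hxL : (x / S) ^ (p / (p - 1)) ≤ L := by
    calc (x / S) ^ (p / (p - 1)) = ((x / S) ^ p) ^ (p - 1)⁻¹ := by
          rw [← rpow_mul (by positivity), div_eq_mul_inv p]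
      _ ≤ (L ^ (p - 1)) ^ (p - 1)⁻¹ := by gcongr
      _ = L := by rw [← rpow_mul hL0.le, mul_inv_cancel₀ hp1.ne', rpow_one]
  calc d = exp (1 - L) := by rw [hL_def, sub_sub_cancel, exp_log hd0]
    _ ≤ _ := by gcongr

lemma mu01_lt_abs_le {p S x : ℝ} (hp : 1 < p) (hS : 0 < S) {g : ℝ → ℝ}
    (hg : XpNorm p g ≤ ENNReal.ofReal S) (hx : 0 ≤ x) :
    mu01 {s | x < |g s|} ≤ ENNReal.ofReal (exp (1 - (x / S) ^ (p / (p - 1)))) := by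
  have hp0 : 0 < p := by linarith
  have hset : {s | x < |g s|} = {s | x ^ p < |g s| ^ p} := by
    ext s
    exact (rpow_lt_rpow_iff hx (abs_nonneg _) hp0).symm
  rw [hset, ← ENNReal.ofReal_toReal (measure_ne_top _ _)]
  refine ENNReal.ofReal_le_ofReal
    (le_exp_of_Wp_mul_rpow_le hp (measureReal_mu01_mem_Icc _) hS hx ?_)
  have hW := Wp_nonneg p (measureReal_mu01_mem_Icc {s | x ^ p < |g s| ^ p})
  rw [← ENNReal.ofReal_le_ofReal_iff (by positivity), ENNReal.ofReal_mul hW,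
    ← ENNReal.ofReal_rpow_of_nonneg hS.le hp0.le]
  exact (ofReal_Wp_mul_le_XpNorm_rpow hp g _).trans (ENNReal.rpow_le_rpow hg hp0.le)

lemma rpow_add_le_add_rpow_of_one_le {a b q : ℝ} (ha : 1 ≤ a) (hb : 0 ≤ b) (hq : 1 ≤ q) :
    a ^ q + b ≤ (a + b) ^ q := by
  have ha0 : 0 < a := by linarith
  calc a ^ q + b ≤ a ^ q + a ^ (q - 1) * b := by
        gcongr
        exact le_mul_of_one_le_left hb (one_le_rpow ha (by linarith))
    _ = a ^ (q - 1) * (a + b) := by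
        rw [mul_add, ← rpow_add_one ha0.ne', sub_add_cancel]
    _ ≤ (a + b) ^ (q - 1) * (a + b) := by gcongr; linarith
    _ = (a + b) ^ q := by rw [← rpow_add_one (by positivity), sub_add_cancel]

lemma lintegral_Ioi_exp_neg_inv_mul {S : ℝ} (hS : 0 < S) :
    ∫⁻ u in Set.Ioi 0, ENNReal.ofReal (exp (-S⁻¹ * u)) = ENNReal.ofReal S := by
  have ha : -S⁻¹ < 0 := neg_lt_zero.2 (inv_pos.2 hS)
  rw [← ofReal_integral_eq_lintegral_ofReal (integrableOn_exp_mul_Ioi ha 0)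
    (ae_of_all _ fun _ => (exp_pos _).le), integral_exp_mul_Ioi ha]
  field_simp
  simp

lemma lintegral_ofReal_abs_sub_le {p S L : ℝ} (hp : 1 < p) (hS : 0 < S) (hL : 1 ≤ L)
    {g : ℝ → ℝ} (hg : Measurable g) (hX : XpNorm p g ≤ ENNReal.ofReal S) :
    ∫⁻ s, ENNReal.ofReal (|g s| - S * L ^ ((p - 1) / p)) ∂mu01 ≤
      ENNReal.ofReal (exp (1 - L) * S) := by
  set u₀ := S * L ^ ((p - 1) / p)
  have hq : 1 ≤ p / (p - 1) := by rw [le_div_iff₀ (by linarith)]; linarith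
  have htail : ∀ u ∈ Set.Ioi (0 : ℝ), mu01 {s | u < max (|g s| - u₀) 0} ≤
      ENNReal.ofReal (exp (1 - L)) * ENNReal.ofReal (exp (-S⁻¹ * u)) := by
    intro u (hu : 0 < u)
    have hset : {s | u < max (|g s| - u₀) 0} = {s | u₀ + u < |g s|} := by
      ext s
      simp only [Set.mem_ofPred_eq, lt_max_iff, not_lt_of_gt hu, or_false]
      constructor <;> intro h <;> linarith
    have hscale : (u₀ + u) / S = L ^ (p / (p - 1))⁻¹ + S⁻¹ * u := by
      rw [inv_div, add_div, mul_div_cancel_left₀ _ hS.ne', inv_mul_eq_div]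
    have hgrow := rpow_add_le_add_rpow_of_one_le
      (one_le_rpow hL (by positivity : 0 ≤ (p / (p - 1))⁻¹))
      (by positivity : 0 ≤ S⁻¹ * u) hq
    rw [← rpow_mul (by linarith), inv_mul_cancel₀ (by linarith), rpow_one] at hgrow
    rw [hset, ← ENNReal.ofReal_mul (exp_pos _).le, ← exp_add]
    refine (mu01_lt_abs_le hp hS hX (by positivity)).trans (ENNReal.ofReal_le_ofReal ?_)
    rw [hscale]
    gcongr
    linarith
  calc ∫⁻ s, ENNReal.ofReal (|g s| - u₀) ∂mu01
      = ∫⁻ s, ENNReal.ofReal (max (|g s| - u₀) 0) ∂mu01 := by simp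
    _ = ∫⁻ u in Set.Ioi 0, mu01 {s | u < max (|g s| - u₀) 0} :=
        lintegral_eq_lintegral_meas_lt _ (ae_of_all _ fun _ => le_max_right _ _)
          ((hg.abs.sub_const _).max measurable_const).aemeasurable
    _ ≤ ∫⁻ u in Set.Ioi 0,
          ENNReal.ofReal (exp (1 - L)) * ENNReal.ofReal (exp (-S⁻¹ * u)) :=
        setLIntegral_mono' measurableSet_Ioi htail
    _ = ENNReal.ofReal (exp (1 - L) * S) := by
        rw [lintegral_const_mul' _ _ ENNReal.ofReal_ne_top, lintegral_Ioi_exp_neg_inv_mul hS,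
          ENNReal.ofReal_mul (exp_pos _).le]

lemma lintegral_iSup_enorm_le {ι : Type*} [Fintype ι] [Nonempty ι] {p S : ℝ} (hp : 1 < p)
    (hS : 0 < S) {g : ι → ℝ → ℝ} (hg : ∀ i, Measurable (g i))
    (hX : ∀ i, XpNorm p (g i) ≤ ENNReal.ofReal S) :
    ∫⁻ s, ⨆ i, ‖g i s‖ₑ ∂mu01 ≤
      ENNReal.ofReal (S * (1 + log (Fintype.card ι)) ^ ((p - 1) / p) + S) := by
  set N : ℝ := (Fintype.card ι : ℝ)
  have hN : 1 ≤ N := Nat.one_le_cast.2 Fintype.card_pos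
  have hL : 1 ≤ 1 + log N := by linarith [log_nonneg hN]
  set u₀ := S * (1 + log N) ^ ((p - 1) / p)
  have hu₀ : 0 ≤ u₀ := by positivity
  have hpoint : ∀ s,
      ⨆ i, ‖g i s‖ₑ ≤ ENNReal.ofReal u₀ + ∑ i, ENNReal.ofReal (|g i s| - u₀) := by
    refine fun s => iSup_le fun i => ?_
    calc ‖g i s‖ₑ = ENNReal.ofReal (u₀ + (|g i s| - u₀)) := by
          rw [add_sub_cancel, Real.enorm_eq_ofReal_abs]
      _ ≤ ENNReal.ofReal u₀ + ENNReal.ofReal (|g i s| - u₀) := ENNReal.ofReal_add_le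
      _ ≤ _ := by
          gcongr
          exact Finset.single_le_sum (f := fun j => ENNReal.ofReal (|g j s| - u₀))
            (fun j _ => zero_le) (Finset.mem_univ i)
  have hexcess :
      ∀ i, ∫⁻ s, ENNReal.ofReal (|g i s| - u₀) ∂mu01 ≤ ENNReal.ofReal (N⁻¹ * S) := by
    intro i
    convert lintegral_ofReal_abs_sub_le hp hS hL (hg i) (hX i) using 3
    rw [sub_add_cancel_left, exp_neg, exp_log (by linarith)]
  calc ∫⁻ s, ⨆ i, ‖g i s‖ₑ ∂mu01
      ≤ ∫⁻ s, (ENNReal.ofReal u₀ + ∑ i, ENNReal.ofReal (|g i s| - u₀)) ∂mu01 :=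
        lintegral_mono hpoint
    _ = ENNReal.ofReal u₀ + ∑ i, ∫⁻ s, ENNReal.ofReal (|g i s| - u₀) ∂mu01 := by
        rw [lintegral_add_left measurable_const, lintegral_const, measure_univ, mul_one,
          lintegral_finsetSum _ fun i _ => ((hg i).abs.sub_const u₀).ennreal_ofReal]
    _ ≤ ENNReal.ofReal u₀ + ∑ _i : ι, ENNReal.ofReal (N⁻¹ * S) := by
        gcongr with i
        exact hexcess i
    _ = ENNReal.ofReal (u₀ + S) := by
        rw [Finset.sum_const, Finset.card_univ, nsmul_eq_mul, ← ENNReal.ofReal_natCast,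
          ← ENNReal.ofReal_mul (Nat.cast_nonneg _), ← mul_assoc,
          mul_inv_cancel₀ (by positivity), one_mul, ENNReal.ofReal_add hu₀ hS.le]

def boolSign (b : Bool) : ({-1, 1} : Set ℝ) :=
  if b then ⟨1, by simp⟩ else ⟨-1, by simp⟩

lemma boolSign_decide_nonneg_mul (x : ℝ) : (boolSign (decide (0 ≤ x)) : ℝ) * x = |x| := by
  by_cases hx : 0 ≤ x
  · simp [boolSign, hx, abs_of_nonneg hx]
  · simp [boolSign, hx, abs_of_neg (not_le.1 hx)]

/-- Tying together the signs off `A` makes the number of patterns independent of `ι`. -/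
def signPattern {ι : Type*} [DecidableEq ι] (A : Finset ι) (σ : (A → Bool) × Bool) (k : ι) :
    ({-1, 1} : Set ℝ) :=
  if h : k ∈ A then boolSign (σ.1 ⟨k, h⟩) else boolSign σ.2

lemma card_signPattern_index {ι : Type*} [DecidableEq ι] (A : Finset ι) :
    Fintype.card ((A → Bool) × Bool) = 2 ^ A.card * 2 := by
  rw [Fintype.card_prod, Fintype.card_fun, Fintype.card_bool, Fintype.card_coe]

lemma exists_sum_abs_le_abs_sum_signPattern {ι : Type*} [Fintype ι] [DecidableEq ι]
    (A : Finset ι) (a : ι → ℝ) :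
    ∃ σ, ∑ k ∈ A, |a k| ≤ |∑ k, (signPattern A σ k : ℝ) * a k| := by
  let σ : (A → Bool) × Bool := (fun k => decide (0 ≤ a k), decide (0 ≤ ∑ k ∈ Aᶜ, a k))
  have hA : ∑ k ∈ A, (signPattern A σ k : ℝ) * a k = ∑ k ∈ A, |a k| :=
    Finset.sum_congr rfl fun k hk => by simp [signPattern, σ, hk, boolSign_decide_nonneg_mul]
  have hAc : ∑ k ∈ Aᶜ, (signPattern A σ k : ℝ) * a k = |∑ k ∈ Aᶜ, a k| := by
    rw [← boolSign_decide_nonneg_mul, Finset.mul_sum]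
    exact Finset.sum_congr rfl fun k hk => by simp [signPattern, σ, Finset.mem_compl.1 hk]
  refine ⟨σ, ?_⟩
  rw [← Finset.sum_add_sum_compl A, hA, hAc, abs_of_nonneg (by positivity)]
  exact le_add_of_nonneg_right (abs_nonneg _)

lemma one_add_log_two_pow_mul_two_rpow_le {m : ℕ} (hm : 1 ≤ m) {a : ℝ} (ha₀ : 0 ≤ a)
    (ha₁ : a ≤ 1) : (1 + log (2 ^ m * 2)) ^ a ≤ 3 * (m : ℝ) ^ a := by
  have hm' : (1 : ℝ) ≤ m := Nat.one_le_cast.2 hm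
  have hlog : 1 + log (2 ^ m * 2) ≤ 3 * m := by
    rw [← pow_succ, log_pow]
    push_cast
    nlinarith [log_two_lt_d9, log_nonneg one_le_two]
  calc (1 + log (2 ^ m * 2)) ^ a ≤ (3 * m) ^ a := by
        gcongr
        linarith [log_nonneg (one_le_mul_of_one_le_of_one_le (one_le_pow₀ one_le_two) one_le_two :
          (1 : ℝ) ≤ 2 ^ m * 2)]
    _ = 3 ^ a * (m : ℝ) ^ a := mul_rpow (by norm_num) (by positivity)
    _ ≤ 3 * (m : ℝ) ^ a := by
        gcongr
        simpa using rpow_le_rpow_of_exponent_le (by norm_num : (1 : ℝ) ≤ 3) ha₁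

lemma mul_card_rpow_le_of_mul_card_le {p S t : ℝ} {m : ℕ} (hp : 1 < p) (hS : 0 ≤ S)
    (hm : 1 ≤ m) (h : t * m ≤ S * (1 + log (2 ^ m * 2)) ^ ((p - 1) / p) + S) :
    t * (m : ℝ) ^ (1 / p) ≤ 4 * S := by
  set a := (p - 1) / p
  have ha₀ : 0 ≤ a := div_nonneg (by linarith) (by linarith)
  have hma : 1 ≤ (m : ℝ) ^ a := one_le_rpow (Nat.one_le_cast.2 hm) ha₀
  have hlog := one_add_log_two_pow_mul_two_rpow_le hm ha₀
    (div_le_one_of_le₀ (by linarith) (by linarith))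
  have hsplit : (m : ℝ) ^ (1 / p) * (m : ℝ) ^ a = m := by
    rw [← rpow_add (by positivity), show 1 / p + (p - 1) / p = 1 by
      rw [← add_div, add_sub_cancel, div_self (by linarith)], rpow_one]
  refine le_of_mul_le_mul_right ?_ (zero_lt_one.trans_le hma)
  rw [mul_assoc, hsplit]
  nlinarith

lemma ofReal_mul_card_le {ι : Type*} [Fintype ι] [DecidableEq ι] {p S t : ℝ} (hp : 1 < p)
    (hS : 0 < S) (ht₀ : 0 ≤ t) {f : ι → ℝ → ℝ} (hf : ∀ k, Measurable (f k))
    (hX : ∀ ε : ι → ({-1, 1} : Set ℝ),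
      XpNorm p (fun s => ∑ k, (ε k : ℝ) * f k s) ≤ ENNReal.ofReal S)
    (A : Finset ι) (ht : ∀ k ∈ A, ENNReal.ofReal t ≤ eLpNorm (f k) 1 mu01) :
    ENNReal.ofReal (t * A.card) ≤
      ENNReal.ofReal (S * (1 + log (2 ^ A.card * 2)) ^ ((p - 1) / p) + S) := by
  let g : (A → Bool) × Bool → ℝ → ℝ := fun σ s =>
    ∑ k, (signPattern A σ k : ℝ) * f k s
  have hdom : ∀ s, ∑ k ∈ A, ‖f k s‖ₑ ≤ ⨆ σ, ‖g σ s‖ₑ := fun s => by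
    obtain ⟨σ, hσ⟩ := exists_sum_abs_le_abs_sum_signPattern A fun k => f k s
    simp only [Real.enorm_eq_ofReal_abs]
    rw [← ENNReal.ofReal_sum_of_nonneg fun _ _ => abs_nonneg _]
    exact (ENNReal.ofReal_le_ofReal hσ).trans (le_iSup (fun σ => ENNReal.ofReal |g σ s|) σ)
  have hmax := lintegral_iSup_enorm_le hp hS (g := g)
    (fun σ => Finset.measurable_sum _ fun k _ => (hf k).const_mul _) (fun σ => hX _)
  rw [card_signPattern_index, Nat.cast_mul, Nat.cast_pow, Nat.cast_two] at hmax
  calc ENNReal.ofReal (t * A.card) = ∑ _k ∈ A, ENNReal.ofReal t := by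
        rw [Finset.sum_const, nsmul_eq_mul, ENNReal.ofReal_mul ht₀, mul_comm,
          ENNReal.ofReal_natCast]
    _ ≤ ∑ k ∈ A, eLpNorm (f k) 1 mu01 := Finset.sum_le_sum ht
    _ = ∫⁻ s, ∑ k ∈ A, ‖f k s‖ₑ ∂mu01 := by
        simp only [eLpNorm_one_eq_lintegral_enorm]
        rw [lintegral_finsetSum _ fun k _ => (hf k).enorm]
    _ ≤ ∫⁻ s, ⨆ σ, ‖g σ s‖ₑ ∂mu01 := lintegral_mono hdom
    _ ≤ _ := hmax

lemma mul_card_rpow_le {ι : Type*} [Fintype ι] [DecidableEq ι] {p S t : ℝ} (hp : 1 < p)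
    (hS : 0 < S) {f : ι → ℝ → ℝ} (hf : ∀ k, Measurable (f k))
    (hX : ∀ ε : ι → ({-1, 1} : Set ℝ),
      XpNorm p (fun s => ∑ k, (ε k : ℝ) * f k s) ≤ ENNReal.ofReal S)
    (A : Finset ι) (ht : ∀ k ∈ A, ENNReal.ofReal t ≤ eLpNorm (f k) 1 mu01) :
    t * (A.card : ℝ) ^ (1 / p) ≤ 4 * S := by
  rcases le_or_gt t 0 with ht₀ | ht₀
  · exact (mul_nonpos_of_nonpos_of_nonneg ht₀ (by positivity)).trans (by positivity)
  rcases A.eq_empty_or_nonempty with rfl | hA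
  · rw [Finset.card_empty, Nat.cast_zero, zero_rpow (one_div_pos.2 (by linarith)).ne', mul_zero]
    positivity
  refine mul_card_rpow_le_of_mul_card_le hp hS.le hA.card_pos ?_
  have hsum := ofReal_mul_card_le hp hS ht₀.le hf hX A ht
  exact (ENNReal.ofReal_le_ofReal_iff'.1 hsum).resolve_right
    (not_le.2 (mul_pos ht₀ (Nat.cast_pos.2 hA.card_pos)))

lemma weakLq_le {q C : ℝ} {n : ℕ} {a : Fin n → ℝ}
    (h : ∀ t : ℝ, 0 < t →
      t * ((Finset.univ.filter fun k => t < |a k|).card : ℝ) ^ (1 / q) ≤ C) :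
    weakLq q a ≤ C := by
  have : Nonempty (Set.Ioi (0 : ℝ)) := ⟨⟨1, by norm_num⟩⟩
  refine ciSup_le fun t => ?_
  rw [Nat.card_eq_fintype_card, Fintype.card_subtype]
  exact h t t.2

theorem Xp_subset_L1_weak_lp_summing_general (p : ℝ) (hp : 1 < p) :
    ∃ c : ℝ, 0 < c ∧ ∀ (n : ℕ) (f : Fin n → ℝ → ℝ),
      (∀ k, Measurable (f k)) → (∀ k, XpNorm p (f k) ≠ ⊤) →
      ENNReal.ofReal (weakLq p fun k => (eLpNorm (f k) 1 mu01).toReal) ≤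
        ENNReal.ofReal c *
          ⨆ ε : Fin n → ({-1, 1} : Set ℝ),
            XpNorm p (fun t => ∑ k, (ε k : ℝ) * f k t) := by
  refine ⟨4, by norm_num, fun n f hf _ => ?_⟩
  set S := ⨆ ε : Fin n → ({-1, 1} : Set ℝ), XpNorm p (fun t => ∑ k, (ε k : ℝ) * f k t)
  rcases eq_or_ne S ⊤ with hS | hS
  · simp [hS]
  rw [← ENNReal.ofReal_toReal hS, ← ENNReal.ofReal_mul (by norm_num)]
  refine ENNReal.ofReal_le_ofReal (weakLq_le fun t _ => le_of_forall_pos_le_add fun δ hδ => ?_)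
  -- `mul_card_rpow_le` needs a strictly positive bound, hence the slack `δ`
  have hX : ∀ ε : Fin n → ({-1, 1} : Set ℝ),
      XpNorm p (fun s => ∑ k, (ε k : ℝ) * f k s) ≤ ENNReal.ofReal (S.toReal + δ / 4) :=
    fun ε => (le_iSup _ ε).trans
      ((ENNReal.ofReal_toReal hS).ge.trans (ENNReal.ofReal_le_ofReal (by linarith)))
  have := mul_card_rpow_le hp (by positivity) hf hX
    (Finset.univ.filter fun k => t < |(eLpNorm (f k) 1 mu01).toReal|) fun k hk =>
      ENNReal.ofReal_le_of_le_toReal (by simpa using (Finset.mem_filter.1 hk).2.le)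
  linarith

/-- Corollary: for `1 < p < 2`, the inclusion `X_p ⊂ L^1` is
`(ℓ^{p,∞},1)`-absolutely summing. -/
theorem Xp_subset_L1_weak_lp_summing (p : ℝ) (hp : 1 < p) (hp2 : p < 2) :
    ∃ c : ℝ, 0 < c ∧ ∀ (n : ℕ) (f : Fin n → ℝ → ℝ),
      (∀ k, Measurable (f k)) → (∀ k, XpNorm p (f k) ≠ ⊤) →
      ENNReal.ofReal (weakLq p fun k => (eLpNorm (f k) 1 mu01).toReal) ≤
        ENNReal.ofReal c *
          ⨆ ε : Fin n → ({-1, 1} : Set ℝ),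
            XpNorm p (fun t => ∑ k, (ε k : ℝ) * f k t) :=
  Xp_subset_L1_weak_lp_summing_general p hp
end

section
/- Let n ∈ ℕ, let f_1, …, f_n ∈ L^1[0,1] satisfy ‖f_k‖_{L^1} = 1 for all k, and let a_1, …, a_n be real numbers. Then there exist signs δ_1, …, δ_n ∈ {-1, 1} such that ∫_0^1 |Σ_{k=1}^n δ_k a_k f_k(t)| dt ≥ (1/√2) · (Σ_{k=1}^n a_k²)^{1/2}. -/
open MeasureTheory
open scoped ENNReal

/-!
Averaging over all sign patterns, the claim follows from the sharp L¹ Khintchine inequality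
`2⁻ⁿ ∑_ε |∑ εᵢ bᵢ| ≥ ‖b‖₂ / √2` (Szarek), applied pointwise to `bᵢ = aᵢ fᵢ(t)`, and Minkowski's
integral inequality `∫ ‖(aᵢ fᵢ)ᵢ‖₂ ≥ ‖(∫ |aᵢ fᵢ|)ᵢ‖₂ = ‖a‖₂`.

For Khintchine we follow Latała and Oleszkiewicz. `F(ε) = |∑ εᵢ bᵢ|` is even, and the triangle
inequality gives `∑ᵢ F(ε with εᵢ flipped) ≥ (n - 2) F(ε)`. In terms of the Walsh expansion of `F`
this reads `∑_S |S| F̂(S)² ≤ ∑_S F̂(S)²`; since the odd levels vanish, all the weight off the empty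
set sits on levels `|S| ≥ 2`, whence `E F² ≤ 2 (E F)²`, while `E F² = ‖b‖₂²`.
-/

open Finset

namespace BooleanCube

variable {ι : Type*}

def toSign (b : Bool) : ℝ := if b then 1 else -1

lemma toSign_mul_self (b : Bool) : toSign b * toSign b = 1 := by cases b <;> norm_num [toSign]

lemma toSign_not (b : Bool) : toSign (!b) = -toSign b := by cases b <;> simp [toSign]

lemma toSign_eq_one_or_eq_neg_one (b : Bool) : toSign b = 1 ∨ toSign b = -1 := by
  cases b <;> simp [toSign]

def walsh (S : Finset ι) (ε : ι → Bool) : ℝ := ∏ i ∈ S, toSign (ε i)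

lemma sum_walsh_apply_mul_walsh_apply [Fintype ι] (ε ε' : ι → Bool) :
    ∑ S : Finset ι, walsh S ε * walsh S ε' = if ε = ε' then 2 ^ Fintype.card ι else 0 := by
  have hfactor (i : ι) : 1 + toSign (ε i) * toSign (ε' i) = if ε i = ε' i then 2 else 0 := by
    cases ε i <;> cases ε' i <;> norm_num [toSign]
  simp_rw [walsh, ← prod_mul_distrib, ← powerset_univ, ← prod_one_add, hfactor]
  split_ifs with h
  · simp [h]
  · obtain ⟨i, hi⟩ := Function.ne_iff.1 h
    exact prod_eq_zero (mem_univ i) (if_neg hi)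

variable [DecidableEq ι]

lemma walsh_mul_walsh (S T : Finset ι) (ε : ι → Bool) :
    walsh S ε * walsh T ε = walsh (symmDiff S T) ε := by
  have hunion : S ∪ T = symmDiff S T ∪ S ∩ T := (symmDiff_sup_inf S T).symm
  have hdisj : Disjoint (symmDiff S T) (S ∩ T) := disjoint_symmDiff_inf S T
  have hsq : (∏ i ∈ S ∩ T, toSign (ε i)) * ∏ i ∈ S ∩ T, toSign (ε i) = 1 := by
    rw [← prod_mul_distrib]
    exact prod_eq_one fun i _ => toSign_mul_self _
  rw [walsh, walsh, walsh, ← prod_union_inter, hunion, prod_union hdisj, mul_assoc, hsq, mul_one]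

def flipOn (A : Finset ι) (ε : ι → Bool) : ι → Bool := fun i => if i ∈ A then !ε i else ε i

lemma flipOn_flipOn (A : Finset ι) (ε : ι → Bool) : flipOn A (flipOn A ε) = ε := by
  funext i; by_cases hi : i ∈ A <;> simp [flipOn, hi]

lemma walsh_flipOn (S A : Finset ι) (ε : ι → Bool) :
    walsh S (flipOn A ε) = (-1) ^ (S ∩ A).card * walsh S ε := by
  have hfactor (i : ι) : toSign (flipOn A ε i) = (if i ∈ A then -1 else 1) * toSign (ε i) := by
    by_cases hi : i ∈ A <;> simp [flipOn, hi, toSign_not]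
  simp_rw [walsh, hfactor, prod_mul_distrib, prod_ite_mem, prod_const]

variable [Fintype ι]

lemma sum_walsh (S : Finset ι) :
    ∑ ε : ι → Bool, walsh S ε = if S = ∅ then 2 ^ Fintype.card ι else 0 := by
  have hfactor (i : ι) : ∑ b : Bool, (if i ∈ S then toSign b else 1) = if i ∈ S then 0 else 2 := by
    split_ifs <;> norm_num [toSign]
  have hprod (ε : ι → Bool) : walsh S ε = ∏ i, if i ∈ S then toSign (ε i) else 1 := by
    rw [prod_ite_mem, univ_inter, walsh]
  simp_rw [hprod, ← Fintype.prod_sum (fun i b => if i ∈ S then toSign b else 1), hfactor]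
  split_ifs with hS
  · simp [hS]
  · obtain ⟨i, hi⟩ := nonempty_iff_ne_empty.2 hS
    exact prod_eq_zero (mem_univ i) (if_pos hi)

lemma sum_walsh_mul_walsh (S T : Finset ι) :
    ∑ ε : ι → Bool, walsh S ε * walsh T ε = if S = T then 2 ^ Fintype.card ι else 0 := by
  simp_rw [walsh_mul_walsh, sum_walsh, ← bot_eq_empty, symmDiff_eq_bot]

def walshCoeff (f : (ι → Bool) → ℝ) (S : Finset ι) : ℝ := ∑ ε, f ε * walsh S ε

lemma sum_walshCoeff_mul_walsh (f : (ι → Bool) → ℝ) (ε : ι → Bool) :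
    ∑ S, walshCoeff f S * walsh S ε = 2 ^ Fintype.card ι * f ε := by
  simp_rw [walshCoeff, sum_mul, mul_assoc]
  rw [sum_comm]
  simp_rw [← mul_sum, sum_walsh_apply_mul_walsh_apply, mul_ite, mul_zero, sum_ite_eq', mem_univ,
    if_true, mul_comm]

lemma sum_walshCoeff_mul_walshCoeff (f g : (ι → Bool) → ℝ) :
    ∑ S, walshCoeff f S * walshCoeff g S = 2 ^ Fintype.card ι * ∑ ε, f ε * g ε := by
  have hg (S : Finset ι) : walshCoeff g S = ∑ ε, g ε * walsh S ε := rfl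
  simp_rw [hg, mul_sum, mul_left_comm (walshCoeff f _)]
  rw [sum_comm]
  simp_rw [← mul_sum, sum_walshCoeff_mul_walsh]
  rw [mul_sum]
  exact sum_congr rfl fun ε _ => by ring

lemma walshCoeff_comp_flipOn (f : (ι → Bool) → ℝ) (A S : Finset ι) :
    walshCoeff (f ∘ flipOn A) S = (-1) ^ (S ∩ A).card * walshCoeff f S := by
  have hinv : Function.Involutive (flipOn A) := flipOn_flipOn A
  rw [walshCoeff, walshCoeff, mul_sum]
  refine Fintype.sum_bijective _ hinv.bijective _ _ fun ε => ?_
  have hsq : ((-1 : ℝ) ^ (S ∩ A).card) ^ 2 = 1 := by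
    rw [← pow_mul, mul_comm, pow_mul, neg_one_sq, one_pow]
  rw [Function.comp_apply, walsh_flipOn]
  linear_combination (-(f (flipOn A ε) * walsh S ε)) * hsq

lemma walshCoeff_eq_zero_of_odd {f : (ι → Bool) → ℝ} (hf : ∀ ε, f (flipOn univ ε) = f ε)
    {S : Finset ι} (hS : Odd S.card) : walshCoeff f S = 0 := by
  have h := walshCoeff_comp_flipOn f univ S
  rw [inter_univ, hS.neg_one_pow, show f ∘ flipOn univ = f from funext hf] at h
  linarith

lemma two_pow_mul_sum_sum_mul_comp_flipOn_singleton (f : (ι → Bool) → ℝ) :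
    2 ^ Fintype.card ι * ∑ i, ∑ ε, f ε * f (flipOn {i} ε)
      = ∑ S, (Fintype.card ι - 2 * S.card : ℝ) * walshCoeff f S ^ 2 := by
  have hflip (i : ι) : 2 ^ Fintype.card ι * ∑ ε, f ε * f (flipOn {i} ε)
      = ∑ S, (-1) ^ (S ∩ {i}).card * walshCoeff f S ^ 2 := by
    have h := sum_walshCoeff_mul_walshCoeff f (f ∘ flipOn {i})
    simp only [Function.comp_apply, walshCoeff_comp_flipOn] at h
    rw [← h]
    exact sum_congr rfl fun S _ => by ring
  have hcount (S : Finset ι) : ∑ i, (-1 : ℝ) ^ (S ∩ {i}).card = Fintype.card ι - 2 * S.card := by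
    simp only [inter_singleton, apply_ite, card_singleton, card_empty, pow_one, pow_zero, sum_ite,
      sum_const, nsmul_eq_mul, mul_neg, mul_one, filter_not, filter_mem_eq_inter, univ_inter,
      ← compl_eq_univ_sdiff, card_compl, Nat.cast_sub S.card_le_univ]
    ring
  rw [mul_sum]
  simp_rw [hflip]
  rw [sum_comm]
  simp_rw [← sum_mul, hcount]

lemma sum_card_mul_walshCoeff_sq_le {f : (ι → Bool) → ℝ} (hf : ∀ ε, 0 ≤ f ε)
    (hflip : ∀ ε, (Fintype.card ι - 2 : ℝ) * f ε ≤ ∑ i, f (flipOn {i} ε)) :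
    ∑ S, (S.card : ℝ) * walshCoeff f S ^ 2 ≤ ∑ S, walshCoeff f S ^ 2 := by
  have hpoint : (Fintype.card ι - 2 : ℝ) * ∑ ε, f ε * f ε ≤ ∑ i, ∑ ε, f ε * f (flipOn {i} ε) := by
    rw [mul_sum, sum_comm]
    refine sum_le_sum fun ε _ => ?_
    rw [← mul_sum, mul_left_comm]
    exact mul_le_mul_of_nonneg_left (hflip ε) (hf ε)
  have hexpand : ∑ S, (Fintype.card ι - 2 * S.card : ℝ) * walshCoeff f S ^ 2
      = Fintype.card ι * ∑ S, walshCoeff f S ^ 2 - 2 * ∑ S, (S.card : ℝ) * walshCoeff f S ^ 2 := by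
    rw [mul_sum, mul_sum, ← sum_sub_distrib]
    exact sum_congr rfl fun S _ => by ring
  have hparseval : ∑ S, walshCoeff f S ^ 2 = 2 ^ Fintype.card ι * ∑ ε, f ε * f ε := by
    simp_rw [sq]
    exact sum_walshCoeff_mul_walshCoeff f f
  have hdirichlet := two_pow_mul_sum_sum_mul_comp_flipOn_singleton f
  rw [hexpand, hparseval] at hdirichlet
  rw [hparseval]
  have h2n : (0 : ℝ) ≤ 2 ^ Fintype.card ι := by positivity
  linear_combination (mul_le_mul_of_nonneg_left hpoint h2n + hdirichlet) / 2

theorem sum_sq_le_two_mul_sq_sum {f : (ι → Bool) → ℝ} (hf : ∀ ε, 0 ≤ f ε)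
    (heven : ∀ ε, f (flipOn univ ε) = f ε)
    (hflip : ∀ ε, (Fintype.card ι - 2 : ℝ) * f ε ≤ ∑ i, f (flipOn {i} ε)) :
    2 ^ Fintype.card ι * ∑ ε, f ε ^ 2 ≤ 2 * (∑ ε, f ε) ^ 2 := by
  have hempty : walshCoeff f ∅ = ∑ ε, f ε := by simp [walshCoeff, walsh]
  have hpoint (S : Finset ι) : walshCoeff f S ^ 2
      ≤ (S.card - 1 : ℝ) * walshCoeff f S ^ 2 + if S = ∅ then 2 * walshCoeff f S ^ 2 else 0 := by
    rcases S.eq_empty_or_nonempty with rfl | hS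
    · simp only [card_empty, Nat.cast_zero, if_true]; linarith
    rcases Nat.even_or_odd S.card with he | ho
    · have h2 : (2 : ℝ) ≤ S.card := by
        obtain ⟨k, hk⟩ := he
        have := hS.card_pos
        exact_mod_cast (show 2 ≤ S.card by omega)
      rw [if_neg hS.ne_empty]
      nlinarith [sq_nonneg (walshCoeff f S)]
    · simp [walshCoeff_eq_zero_of_odd heven ho]
  calc 2 ^ Fintype.card ι * ∑ ε, f ε ^ 2 = ∑ S, walshCoeff f S ^ 2 := by
        simp_rw [sq, sum_walshCoeff_mul_walshCoeff]
    _ ≤ ∑ S, ((S.card - 1 : ℝ) * walshCoeff f S ^ 2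
          + if S = ∅ then 2 * walshCoeff f S ^ 2 else 0) := sum_le_sum fun S _ => hpoint S
    _ = ∑ S, (S.card : ℝ) * walshCoeff f S ^ 2 - ∑ S, walshCoeff f S ^ 2
          + 2 * (∑ ε, f ε) ^ 2 := by
        simp_rw [sum_add_distrib, sub_mul, sum_sub_distrib, one_mul, sum_ite_eq', mem_univ, if_true,
          hempty]
    _ ≤ 2 * (∑ ε, f ε) ^ 2 := by linarith [sum_card_mul_walshCoeff_sq_le hf hflip]

def signedSum (b : ι → ℝ) (ε : ι → Bool) : ℝ := ∑ i, toSign (ε i) * b i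

lemma signedSum_flipOn (b : ι → ℝ) (A : Finset ι) (ε : ι → Bool) :
    signedSum b (flipOn A ε) = signedSum b ε - 2 * ∑ i ∈ A, toSign (ε i) * b i := by
  have hterm (i : ι) : toSign (flipOn A ε i) * b i
      = toSign (ε i) * b i - 2 * if i ∈ A then toSign (ε i) * b i else 0 := by
    by_cases hi : i ∈ A
    · simp only [flipOn, hi, if_true, toSign_not]
      ring
    · simp [flipOn, hi]
  simp_rw [signedSum, hterm, sum_sub_distrib, ← mul_sum, sum_ite_mem, univ_inter]

lemma sum_signedSum_sq (b : ι → ℝ) :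
    ∑ ε, signedSum b ε ^ 2 = 2 ^ Fintype.card ι * ∑ i, b i ^ 2 := by
  have hsq (ε : ι → Bool) :
      signedSum b ε ^ 2 = ∑ i, ∑ j, b i * b j * (walsh {i} ε * walsh {j} ε) := by
    rw [signedSum, sq, sum_mul_sum]
    refine sum_congr rfl fun i _ => sum_congr rfl fun j _ => ?_
    simp only [walsh, prod_singleton]
    ring
  simp_rw [hsq]
  rw [sum_comm]
  simp_rw [sum_comm (γ := ι → Bool), ← mul_sum, sum_walsh_mul_walsh, singleton_inj, mul_ite,
    mul_zero, sum_ite_eq, mem_univ, if_true, mul_sum]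
  exact sum_congr rfl fun i _ => by ring

lemma sub_two_mul_abs_signedSum_le (b : ι → ℝ) (ε : ι → Bool) :
    (Fintype.card ι - 2 : ℝ) * |signedSum b ε| ≤ ∑ i, |signedSum b (flipOn {i} ε)| := by
  have hsum : ∑ i, signedSum b (flipOn {i} ε) = (Fintype.card ι - 2) * signedSum b ε := by
    simp_rw [signedSum_flipOn, sum_singleton, sum_sub_distrib, ← mul_sum, sum_const, card_univ,
      nsmul_eq_mul, signedSum]
    ring
  calc (Fintype.card ι - 2 : ℝ) * |signedSum b ε| ≤ |(Fintype.card ι - 2) * signedSum b ε| := by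
        rw [abs_mul]
        exact mul_le_mul_of_nonneg_right (le_abs_self _) (abs_nonneg _)
    _ = |∑ i, signedSum b (flipOn {i} ε)| := by rw [hsum]
    _ ≤ ∑ i, |signedSum b (flipOn {i} ε)| := abs_sum_le_sum_abs _ _

theorem khintchine_l1_lower (b : ι → ℝ) :
    2 ^ Fintype.card ι * (√(∑ i, b i ^ 2) / √2) ≤ ∑ ε, |signedSum b ε| := by
  have heven (ε : ι → Bool) : |signedSum b (flipOn univ ε)| = |signedSum b ε| := by
    rw [signedSum_flipOn, ← signedSum, two_mul, sub_add_cancel_left, abs_neg]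
  have h := sum_sq_le_two_mul_sq_sum (fun ε => abs_nonneg (signedSum b ε)) heven
    (sub_two_mul_abs_signedSum_le b)
  simp_rw [sq_abs, sum_signedSum_sq] at h
  refine le_of_pow_le_pow_left₀ two_ne_zero (sum_nonneg fun ε _ => abs_nonneg _) ?_
  rw [mul_pow, div_pow, Real.sq_sqrt (sum_nonneg fun i _ => sq_nonneg _),
    Real.sq_sqrt zero_le_two]
  linarith

end BooleanCube

open BooleanCube

lemma sqrt_sum_sq_integral_abs_le {α ι : Type*} [MeasurableSpace α] {μ : Measure α} [Fintype ι]
    {g : ι → α → ℝ} (hg : ∀ i, Integrable (g i) μ) :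
    √(∑ i, (∫ x, |g i x| ∂μ) ^ 2) ≤ ∫ x, √(∑ i, g i x ^ 2) ∂μ := by
  let F : α → EuclideanSpace ℝ ι := fun x => WithLp.toLp 2 fun i => |g i x|
  have hF (i : ι) : Integrable (F · i) μ := (hg i).abs
  calc √(∑ i, (∫ x, |g i x| ∂μ) ^ 2) = ‖∫ x, F x ∂μ‖ := by
        simp [EuclideanSpace.norm_eq, eval_integral_piLp hF, F]
    _ ≤ ∫ x, ‖F x‖ ∂μ := norm_integral_le_integral_norm _
    _ = ∫ x, √(∑ i, g i x ^ 2) ∂μ := by simp [EuclideanSpace.norm_eq, F]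

theorem exists_signs_sqrt_sum_sq_integral_abs_le {α ι : Type*} [MeasurableSpace α]
    {μ : Measure α} [Fintype ι] [DecidableEq ι] {g : ι → α → ℝ} (hg : ∀ i, Integrable (g i) μ) :
    ∃ ε : ι → Bool,
      √(∑ i, (∫ x, |g i x| ∂μ) ^ 2) / √2 ≤ ∫ x, |signedSum (g · x) ε| ∂μ := by
  have hint (ε : ι → Bool) : Integrable (fun x => |signedSum (g · x) ε|) μ :=
    (integrable_finsetSum _ fun i _ => (hg i).const_mul _).abs
  refine (exists_le_of_sum_le univ_nonempty ?_).imp fun ε hε => hε.2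
  calc ∑ _ε : ι → Bool, √(∑ i, (∫ x, |g i x| ∂μ) ^ 2) / √2
      = 2 ^ Fintype.card ι * (√(∑ i, (∫ x, |g i x| ∂μ) ^ 2) / √2) := by
        simp [sum_const, card_univ]
    _ ≤ 2 ^ Fintype.card ι * ((∫ x, √(∑ i, g i x ^ 2) ∂μ) / √2) := by
        gcongr
        exact sqrt_sum_sq_integral_abs_le hg
    _ = ∫ x, 2 ^ Fintype.card ι * (√(∑ i, g i x ^ 2) / √2) ∂μ := by
        rw [integral_const_mul, integral_div]
    _ ≤ ∫ x, ∑ ε, |signedSum (g · x) ε| ∂μ :=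
        integral_mono_of_nonneg (ae_of_all _ fun x => by positivity)
          (integrable_finsetSum _ fun ε _ => hint ε) (ae_of_all _ fun x => khintchine_l1_lower _)
    _ = ∑ ε, ∫ x, |signedSum (g · x) ε| ∂μ := integral_finsetSum _ fun ε _ => hint ε

/-- Lemma (Khintchine-type sign selection): for norm-one `f_1, …, f_n ∈ L^1[0,1]`
and reals `a_1, …, a_n` there are signs `δ_k = ±1` with
`∫ |∑ δ_k a_k f_k| ≥ (1/√2)(∑ a_k²)^{1/2}`. -/
theorem exists_signs_khintchine_lower (n : ℕ) (f : Fin n → ℝ → ℝ)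
    (hf : ∀ k, Integrable (f k) mu01) (hnorm : ∀ k, ∫ t, |f k t| ∂mu01 = 1)
    (a : Fin n → ℝ) :
    ∃ δ : Fin n → ℝ, (∀ k, δ k = 1 ∨ δ k = -1) ∧
      1 / Real.sqrt 2 * Real.sqrt (∑ k, a k ^ 2) ≤
        ∫ t, |∑ k, δ k * a k * f k t| ∂mu01 := by
  have habs (k : Fin n) : ∫ t, |a k * f k t| ∂mu01 = |a k| := by
    simp_rw [abs_mul, integral_const_mul, hnorm, mul_one]
  obtain ⟨ε, hε⟩ := exists_signs_sqrt_sum_sq_integral_abs_le fun k => (hf k).const_mul (a k)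
  refine ⟨fun k => toSign (ε k), fun k => toSign_eq_one_or_eq_neg_one (ε k), ?_⟩
  simp only [habs, sq_abs] at hε
  simpa [signedSum, mul_assoc, div_eq_inv_mul] using hε
end

section
/- For every n ∈ ℕ, all real numbers a_1, …, a_n, and every τ with 0 < τ ≤ 2^{-n}, one has K(τ, Σ_{k=1}^n a_k r_k; L^1, L^∞) = τ · Σ_{k=1}^n |a_k|, where r_k are the Rademacher functions. Equivalently, ∫_0^τ (Σ_{k=1}^n a_k r_k)^*(t) dt = τ Σ_{k=1}^n |a_k| for 0 < τ ≤ 2^{-n}. -/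
open MeasureTheory
open scoped ENNReal

/-!
For `f = ∑ a_k r_k`, the splitting `f = 0 + f` gives `K(τ, f) ≤ τ ‖f‖_∞ ≤ τ ∑ |a_k|`.
Conversely, the signs of `r_1, …, r_n` are constant on dyadic intervals of length `2^{-n}` and
every sign pattern occurs, so there is an interval `A` of length `τ` on which `f = ∑ |a_k|`.
For any splitting `f = g + h`, `|g| ≥ ∑ |a_k| - ‖h‖_∞` on `A`, whence
`‖g‖₁ + τ ‖h‖_∞ ≥ τ ∑ |a_k|`.
-/

open Set

lemma rademacher_eq_neg_one_pow {k m : ℕ} {t : ℝ} (ht : 2 ^ k * t ∈ Ioo (m : ℝ) (m + 1)) :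
    rademacher k t = (-1) ^ m := by
  obtain ⟨h₁, h₂⟩ := ht
  have hsin : 0 < Real.sin (Real.pi * (2 ^ k * t - m)) :=
    Real.sin_pos_of_pos_of_lt_pi (by nlinarith [Real.pi_pos]) (by nlinarith [Real.pi_pos])
  have : 2 ^ k * Real.pi * t = Real.pi * (2 ^ k * t - m) + m * Real.pi := by ring
  rw [rademacher, this, Real.sin_add_nat_mul_pi]
  rcases neg_one_pow_eq_or ℝ m with h | h <;> rw [h]
  · simp [Real.sign_of_pos hsin]
  · simp [Real.sign_of_neg (neg_neg_of_pos hsin)]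

lemma abs_rademacher_le_one (k : ℕ) (t : ℝ) : |rademacher k t| ≤ 1 := by
  rcases Real.sign_apply_eq (Real.sin (2 ^ k * Real.pi * t)) with h | h | h <;>
    simp [rademacher, h]

theorem exists_dyadic_rademacher_eq_neg_one_pow (n : ℕ) (b : Fin n → ℕ) :
    ∃ m : ℕ, m < 2 ^ n ∧ ∀ t : ℝ, 2 ^ n * t ∈ Ioo (m : ℝ) (m + 1) →
      ∀ k : Fin n, rademacher (k + 1) t = (-1) ^ b k := by
  induction n with
  | zero => exact ⟨0, by simp, fun _ _ k => k.elim0⟩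
  | succ n ih =>
    obtain ⟨m, hm, hrad⟩ := ih fun k => b k.castSucc
    have hbit : b (Fin.last n) % 2 < 2 := Nat.mod_lt _ two_pos
    refine ⟨2 * m + b (Fin.last n) % 2, by omega, fun t ht k => ?_⟩
    induction k using Fin.lastCases with
    | last =>
      rw [Fin.val_last, rademacher_eq_neg_one_pow ht, pow_add, pow_mul,
        neg_one_sq, one_pow, one_mul, ← neg_one_pow_eq_pow_mod_two]
    | cast j =>
      have hparent : 2 ^ n * t ∈ Ioo (m : ℝ) (m + 1) := by
        obtain ⟨h₁, h₂⟩ := ht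
        have : ((b (Fin.last n) % 2 : ℕ) : ℝ) + 1 ≤ 2 := by exact_mod_cast hbit
        push_cast at h₁ h₂
        rw [pow_succ] at h₁ h₂
        constructor <;> nlinarith
      simpa using hrad t hparent j

lemma abs_sum_mul_rademacher_le {n : ℕ} (a : Fin n → ℝ) (t : ℝ) :
    |∑ k, a k * rademacher (k.1 + 1) t| ≤ ∑ k, |a k| := by
  refine (Finset.abs_sum_le_sum_abs _ _).trans (Finset.sum_le_sum fun k _ => ?_)
  rw [abs_mul]
  exact mul_le_of_le_one_right (abs_nonneg _) (abs_rademacher_le_one _ _)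

section KFunctional

variable {α E : Type*} [MeasurableSpace α] [NormedAddCommGroup E]

theorem mul_measure_le_eLpNorm_one_add {μ : Measure α} {A : Set α} (hA : MeasurableSet A)
    {f g h : α → E} (hfgh : f = g + h) {c : ℝ≥0∞} (hc : ∀ t ∈ A, c ≤ ‖f t‖ₑ) :
    c * μ A ≤ eLpNorm g 1 μ + μ A * eLpNorm h ⊤ μ := by
  set H := eLpNormEssSup h μ
  have hg : ∀ᵐ t ∂μ.restrict A, c - H ≤ ‖g t‖ₑ := by
    filter_upwards [ae_restrict_mem hA, ae_restrict_of_ae (ae_le_eLpNormEssSup (f := h))]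
      with t htA hth
    refine tsub_le_iff_right.mpr ((hc t htA).trans ?_)
    calc ‖f t‖ₑ ≤ ‖g t‖ₑ + ‖h t‖ₑ := by rw [hfgh]; exact enorm_add_le _ _
      _ ≤ ‖g t‖ₑ + H := by gcongr
  calc c * μ A ≤ (c - H) * μ A + H * μ A := by rw [← add_mul]; gcongr; exact le_tsub_add
    _ = ∫⁻ _ in A, (c - H) ∂μ + μ A * H := by rw [setLIntegral_const, mul_comm H]
    _ ≤ ∫⁻ t, ‖g t‖ₑ ∂μ + μ A * H :=
      add_le_add_left ((lintegral_mono_ae hg).trans (setLIntegral_le_lintegral _ _)) _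
    _ = eLpNorm g 1 μ + μ A * eLpNorm h ⊤ μ := by
      rw [eLpNorm_one_eq_lintegral_enorm, eLpNorm_exponent_top]

end KFunctional

theorem Kfun_le_mul_eLpNorm_top (τ : ℝ) (f : ℝ → ℝ) :
    Kfun τ f ≤ ENNReal.ofReal τ * eLpNorm f ⊤ mu01 := by
  refine iInf_le_of_le 0 (iInf_le_of_le f (iInf_le_of_le (zero_add f).symm ?_))
  rw [eLpNorm_zero, zero_add]

theorem mul_le_Kfun {τ : ℝ} {f : ℝ → ℝ} {A : Set ℝ} (hA : MeasurableSet A)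
    (hA01 : A ⊆ Icc 0 1) (hAτ : volume A = ENNReal.ofReal τ) {c : ℝ≥0∞}
    (hc : ∀ t ∈ A, c ≤ ‖f t‖ₑ) : c * ENNReal.ofReal τ ≤ Kfun τ f := by
  have hμA : mu01 A = ENNReal.ofReal τ := by
    rw [mu01, Measure.restrict_apply hA, inter_eq_left.mpr hA01, hAτ]
  refine le_iInf fun g => le_iInf fun h => le_iInf fun hfgh => ?_
  simpa only [hμA] using mul_measure_le_eLpNorm_one_add (μ := mu01) hA hfgh hc

theorem exists_Ioo_subset_Icc_rademacher_eq_neg_one_pow {n : ℕ} (b : Fin n → ℕ) {τ : ℝ}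
    (hτ : τ ≤ ((2 : ℝ) ^ n)⁻¹) :
    ∃ l : ℝ, Ioo l (l + τ) ⊆ Icc 0 1 ∧
      ∀ t ∈ Ioo l (l + τ), ∀ k : Fin n, rademacher (k + 1) t = (-1) ^ b k := by
  obtain ⟨m, hm, hrad⟩ := exists_dyadic_rademacher_eq_neg_one_pow n b
  have h2n : (0 : ℝ) < 2 ^ n := by positivity
  have hm1 : (m : ℝ) + 1 ≤ 2 ^ n := by exact_mod_cast hm
  have hτ' : 2 ^ n * τ ≤ 1 := by rw [← mul_inv_cancel₀ h2n.ne']; gcongr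
  have hl : 2 ^ n * (m / 2 ^ n : ℝ) = m := mul_div_cancel₀ _ h2n.ne'
  have hdyadic :
      ∀ t ∈ Ioo (m / 2 ^ n : ℝ) (m / 2 ^ n + τ), 2 ^ n * t ∈ Ioo (m : ℝ) (m + 1) := by
    rintro t ⟨h₁, h₂⟩
    constructor <;> nlinarith
  refine ⟨m / 2 ^ n, fun t ht => ?_, fun t ht => hrad t (hdyadic t ht)⟩
  obtain ⟨h₁, h₂⟩ := hdyadic t ht
  constructor <;> nlinarith [m.cast_nonneg (α := ℝ)]

theorem Kfun_rademacher_small_tau_general (n : ℕ) (a : Fin n → ℝ) (τ : ℝ)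
    (hτ2 : τ ≤ ((2 : ℝ) ^ n)⁻¹) :
    Kfun τ (fun t => ∑ k, a k * rademacher (k.1 + 1) t) =
      ENNReal.ofReal (τ * ∑ k, |a k|) := by
  set f : ℝ → ℝ := fun t => ∑ k, a k * rademacher (k.1 + 1) t
  have hsum : 0 ≤ ∑ k, |a k| := Finset.sum_nonneg fun k _ => abs_nonneg _
  rw [ENNReal.ofReal_mul' hsum]
  refine le_antisymm ((Kfun_le_mul_eLpNorm_top τ f).trans ?_) ?_
  · rw [eLpNorm_exponent_top]
    gcongr
    exact eLpNormEssSup_le_of_ae_bound (ae_of_all _ (abs_sum_mul_rademacher_le a))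
  obtain ⟨l, hl01, hrad⟩ :=
    exists_Ioo_subset_Icc_rademacher_eq_neg_one_pow (fun k => if a k < 0 then 1 else 0) hτ2
  have hf : ∀ t ∈ Ioo l (l + τ), f t = ∑ k, |a k| := fun t ht =>
    Finset.sum_congr rfl fun k _ => by
      rw [hrad t ht k]
      split_ifs with hk
      · simp [abs_of_neg hk]
      · simp [abs_of_nonneg (not_lt.mp hk)]
  rw [mul_comm]
  refine mul_le_Kfun measurableSet_Ioo hl01 (by simp [Real.volume_Ioo]) fun t ht => ?_
  rw [hf t ht, Real.enorm_eq_ofReal hsum]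

/-- For `0 < τ ≤ 2^{-n}`, `K(τ, ∑ a_k r_k; L^1, L^∞) = τ ∑ |a_k|`. -/
theorem Kfun_rademacher_small_tau (n : ℕ) (a : Fin n → ℝ) (τ : ℝ)
    (hτ : 0 < τ) (hτ2 : τ ≤ ((2 : ℝ) ^ n)⁻¹) :
    Kfun τ (fun t => ∑ k, a k * rademacher (k.1 + 1) t) =
      ENNReal.ofReal (τ * ∑ k, |a k|) :=
  Kfun_rademacher_small_tau_general n a τ hτ2
end
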